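/- Let E be a Banach lattice. Every regular operator on E (i.e. every difference of two positive bounded operators E → E) can be written as a difference of two positive limitedly M-weakly compact operators if and only if the identity operator on E is limitedly M-weakly compact. -/

import Mathlib

open Filter Topology

/-- An operator `T` on a Banach lattice `E` is limitedly M-weakly compact if `(T xₙ)` is
weakly null for every disjoint norm bounded sequence `(xₙ)` in `E`. -/
def IsLMwcOp {E : Type*} [NormedAddCommGroup E] [Lattice E] [HasSolidNorm E] [IsOrderedAddMonoid E] [NormedSpace ℝ E]
    {Y : Type*} [NormedAddCommGroup Y] [NormedSpace ℝ Y] (T : E →L[ℝ] Y) : Prop :=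
  ∀ x : ℕ → E, Bornology.IsBounded (Set.range x) →
    (∀ n m, n ≠ m → |x n| ⊓ |x m| = 0) →
      ∀ g : Y →L[ℝ] ℝ, Tendsto (fun n => g (T (x n))) atTop (𝓝 0)

/-- A bounded operator on a Banach lattice is positive if it maps positive elements to
positive elements. -/
def IsPosOp {E : Type*} [NormedAddCommGroup E] [Lattice E] [HasSolidNorm E] [IsOrderedAddMonoid E] [NormedSpace ℝ E]
    (T : E →L[ℝ] E) : Prop :=
  ∀ x : E, 0 ≤ x → 0 ≤ T x

section LMwc

variable {E : Type*} [NormedAddCommGroup E] [Lattice E] [HasSolidNorm E] [IsOrderedAddMonoid E]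
  [NormedSpace ℝ E] {Y : Type*} [NormedAddCommGroup Y] [NormedSpace ℝ Y]

theorem IsLMwcOp.sub {S₁ S₂ : E →L[ℝ] Y} (h₁ : IsLMwcOp S₁) (h₂ : IsLMwcOp S₂) :
    IsLMwcOp (S₁ - S₂) := fun x hb hd g => by
  simpa using (h₁ x hb hd g).sub (h₂ x hb hd g)

theorem IsLMwcOp.comp {Z : Type*} [NormedAddCommGroup Z] [NormedSpace ℝ Z] {T : E →L[ℝ] Y}
    (hT : IsLMwcOp T) (S : Y →L[ℝ] Z) : IsLMwcOp (S.comp T) :=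
  fun x hb hd g => hT x hb hd (g.comp S)

theorem isLMwcOp_of_isLMwcOp_id (h : IsLMwcOp (ContinuousLinearMap.id ℝ E)) (S : E →L[ℝ] Y) :
    IsLMwcOp S :=
  h.comp S

theorem isPosOp_id : IsPosOp (ContinuousLinearMap.id ℝ E) :=
  fun _ hx => hx

theorem isPosOp_zero : IsPosOp (0 : E →L[ℝ] E) :=
  fun _ _ => le_rfl

end LMwc

theorem regular_eq_rLMwc_iff_id_lMwc_general
    {E : Type*} [NormedAddCommGroup E] [Lattice E] [HasSolidNorm E] [IsOrderedAddMonoid E] [NormedSpace ℝ E] :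
    (∀ T : E →L[ℝ] E,
        (∃ T₁ T₂ : E →L[ℝ] E, IsPosOp T₁ ∧ IsPosOp T₂ ∧ T = T₁ - T₂) →
        ∃ S₁ S₂ : E →L[ℝ] E, IsPosOp S₁ ∧ IsPosOp S₂ ∧ IsLMwcOp S₁ ∧ IsLMwcOp S₂ ∧
          T = S₁ - S₂) ↔
      IsLMwcOp (ContinuousLinearMap.id ℝ E) := by
  constructor
  · intro h
    obtain ⟨S₁, S₂, -, -, hS₁, hS₂, hid⟩ :=
      h _ ⟨_, 0, isPosOp_id, isPosOp_zero, (sub_zero _).symm⟩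
    exact hid ▸ hS₁.sub hS₂
  · rintro h T ⟨T₁, T₂, hT₁, hT₂, rfl⟩
    exact ⟨T₁, T₂, hT₁, hT₂, isLMwcOp_of_isLMwcOp_id h T₁, isLMwcOp_of_isLMwcOp_id h T₂, rfl⟩

/-- Every regular operator on `E` is a difference of two positive limitedly M-weakly compact
operators iff the identity of `E` is limitedly M-weakly compact. -/
theorem regular_eq_rLMwc_iff_id_lMwc
    {E : Type*} [NormedAddCommGroup E] [Lattice E] [HasSolidNorm E] [IsOrderedAddMonoid E] [NormedSpace ℝ E] [CompleteSpace E] :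
    (∀ T : E →L[ℝ] E,
        (∃ T₁ T₂ : E →L[ℝ] E, IsPosOp T₁ ∧ IsPosOp T₂ ∧ T = T₁ - T₂) →
        ∃ S₁ S₂ : E →L[ℝ] E, IsPosOp S₁ ∧ IsPosOp S₂ ∧ IsLMwcOp S₁ ∧ IsLMwcOp S₂ ∧
          T = S₁ - S₂) ↔
      IsLMwcOp (ContinuousLinearMap.id ℝ E) :=
  regular_eq_rLMwc_iff_id_lMwc_general
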